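/- arXiv:math/0408291 — 5 statements merged into one kernel-verified Lean document; each statement's English description precedes it below -/
import Mathlib

section
/- Let X be an infinite compact metric space, let h : X → X be a minimal homeomorphism, and let Y ⊆ X be a closed subset with nonempty interior. With the first-return notation, the sets h^j(Y_k°), for 0 ≤ k ≤ l and 1 ≤ j ≤ n(k), are pairwise disjoint. -/
/-- The first return time of `y` to `Y` under the homeomorphism `h`:
`r(y) = min {n ≥ 1 : h^n(y) ∈ Y}` (by convention `sInf ∅ = 0`). -/
noncomputable def firstReturnTime {X : Type*} [TopologicalSpace X]
    (h : X ≃ₜ X) (Y : Set X) (y : X) : ℕ :=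
  sInf {n : ℕ | 1 ≤ n ∧ (⇑h)^[n] y ∈ Y}

/-- The set of points of `Y` with first return time exactly `m`. -/
noncomputable def returnSet {X : Type*} [TopologicalSpace X]
    (h : X ≃ₜ X) (Y : Set X) (m : ℕ) : Set X :=
  {y ∈ Y | firstReturnTime h Y y = m}

/-- Key lemma: if `y₁` has first return time `m₁`, `y₂ ∈ Y`, `1 ≤ j₂ < j₁ ≤ m₁`, then
`h^[j₁] y₁ ≠ h^[j₂] y₂`. -/
lemma rokhlin_key {X : Type*} [TopologicalSpace X] (h : X ≃ₜ X) (Y : Set X)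
    {m₁ m₂ j₁ j₂ : ℕ} {y₁ y₂ : X}
    (h₁ : y₁ ∈ returnSet h Y m₁) (h₂ : y₂ ∈ returnSet h Y m₂)
    (hj₂ : 1 ≤ j₂) (hlt : j₂ < j₁) (hle : j₁ ≤ m₁)
    (heq : (⇑h)^[j₁] y₁ = (⇑h)^[j₂] y₂) : False := by
  obtain ⟨hy₁Y, hr₁⟩ := h₁
  obtain ⟨hy₂Y, hr₂⟩ := h₂
  set d := j₁ - j₂ with hd
  have hd1 : 1 ≤ d := by omega
  have hdlt : d < m₁ := by omega
  have hinj : Function.Injective ((⇑h)^[j₂]) := (h.injective).iterate j₂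
  have hcomp : (⇑h)^[j₂] ((⇑h)^[d] y₁) = (⇑h)^[j₂] y₂ := by
    rw [← Function.iterate_add_apply]
    have : j₂ + d = j₁ := by omega
    rw [this, heq]
  have hmem : (⇑h)^[d] y₁ = y₂ := hinj hcomp
  have : d ∈ {n : ℕ | 1 ≤ n ∧ (⇑h)^[n] y₁ ∈ Y} := ⟨hd1, by rw [hmem]; exact hy₂Y⟩
  have hnot : d ∉ {n : ℕ | 1 ≤ n ∧ (⇑h)^[n] y₁ ∈ Y} := by
    apply Nat.notMem_of_lt_sInf
    rw [← firstReturnTime, hr₁]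
    exact hdlt
  exact hnot this

/-- For a minimal homeomorphism `h` of an infinite compact metric space `X`
and a closed `Y ⊆ X` with nonempty interior, the Rokhlin tower sets
`h^j(Y_m°)`, `Y_m° = interior {y ∈ Y : r(y) = m}`, for `1 ≤ j ≤ m`,
are pairwise disjoint. (For values `m` not attained by the first return time the
corresponding set is empty, so indexing over all `m` is equivalent to indexing over
the attained values `n(0) < ⋯ < n(l)`.) -/
theorem rokhlin_towers_disjoint
    {X : Type*} [MetricSpace X] [CompactSpace X] [Infinite X]
    (h : X ≃ₜ X)
    (hmin : ∀ x : X, Dense (Set.range fun n : ℤ => (h.toEquiv ^ n) x))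
    (Y : Set X) (hYclosed : IsClosed Y) (hYint : (interior Y).Nonempty) :
    ∀ m₁ j₁ m₂ j₂ : ℕ, 1 ≤ j₁ → j₁ ≤ m₁ → 1 ≤ j₂ → j₂ ≤ m₂ →
      (m₁, j₁) ≠ (m₂, j₂) →
      Disjoint ((⇑h)^[j₁] '' interior (returnSet h Y m₁))
        ((⇑h)^[j₂] '' interior (returnSet h Y m₂)) := by
  intro m₁ j₁ m₂ j₂ hj₁ hj₁m hj₂ hj₂m hne
  rw [Set.disjoint_left]
  rintro x ⟨y₁, hy₁, rfl⟩ ⟨y₂, hy₂, heq⟩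
  have h₁ : y₁ ∈ returnSet h Y m₁ := interior_subset hy₁
  have h₂ : y₂ ∈ returnSet h Y m₂ := interior_subset hy₂
  rcases lt_trichotomy j₁ j₂ with hlt | heqj | hgt
  · exact rokhlin_key h Y h₂ h₁ hj₁ hlt hj₂m heq
  · subst heqj
    have hinj : Function.Injective ((⇑h)^[j₁]) := (h.injective).iterate j₁
    have : y₂ = y₁ := hinj heq
    subst this
    exact hne (by rw [← h₁.2, ← h₂.2])
  · exact rokhlin_key h Y h₁ h₂ hj₂ hgt hj₁m heq.symm
end

section
/- Let X be an infinite compact metric space, let h : X → X be a minimal homeomorphism, and let Y ⊆ X be a closed subset with nonempty interior. With the first-return notation, one has ⋃_{k=0}^{l} ⋃_{j=1}^{n(k)} h^j(Y_k) = X and ⋃_{k=0}^{l} h^{n(k)}(Y_k) = Y. -/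
/-!
By compactness, the open sets `h⁻ⁿ(interior Y)` covering `X` reduce to finitely many, so every
point enters `Y` both in the future and in the past. Given `x`, let `z = h⁻ᵐ(x)` be the most
recent visit of its backward orbit to `Y`. No intermediate point lies in `Y`, so `m ≤ r(z)` and `x`
sits on level `m` of the tower over `{r = r(z)}`; if `x ∈ Y` then also `r(z) ≤ m`, so `x` is at the
top. Taking closures of the bases only enlarges the levels, and the top levels stay in `Y` since
`hᵐ` is continuous and `Y` closed.
-/

open Set

namespace Homeomorph

variable {X : Type*} [TopologicalSpace X]

theorem toEquiv_zpow (h : X ≃ₜ X) (n : ℤ) : (h ^ n).toEquiv = h.toEquiv ^ n :=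
  map_zpow (⟨⟨toEquiv, rfl⟩, fun _ _ => rfl⟩ : (X ≃ₜ X) →* Equiv.Perm X) h n

theorem coe_pow (h : X ≃ₜ X) (k : ℕ) : ⇑(h ^ k) = (⇑h)^[k] := by
  induction k with
  | zero => rfl
  | succ k ih => rw [pow_succ', Function.iterate_succ', ← ih]; rfl

theorem dense_zpow_orbit_inv {h : X ≃ₜ X} (hmin : ∀ x, Dense (range fun n : ℤ => (h ^ n) x))
    (x : X) : Dense (range fun n : ℤ => (h⁻¹ ^ n) x) := by
  have : (fun n : ℤ => (h⁻¹ ^ n) x) = (fun n : ℤ => (h ^ n) x) ∘ Neg.neg := by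
    ext n; rw [Function.comp_apply, zpow_neg, inv_zpow]
  rw [this, neg_surjective.range_comp]
  exact hmin x

variable [CompactSpace X] {h : X ≃ₜ X} (hmin : ∀ x, Dense (range fun n : ℤ => (h ^ n) x))
  {U : Set X}
include hmin

theorem exists_natAbs_le_zpow_mem (hU : IsOpen U) (hne : U.Nonempty) :
    ∃ N : ℕ, ∀ x, ∃ n : ℤ, n.natAbs ≤ N ∧ (h ^ n) x ∈ U := by
  have hcover : univ ⊆ ⋃ n : ℤ, ⇑(h ^ n) ⁻¹' U := fun x _ => by
    obtain ⟨_, ⟨n, rfl⟩, hn⟩ := (hmin x).exists_mem_open hU hne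
    exact mem_iUnion.2 ⟨n, hn⟩
  obtain ⟨s, hs⟩ := isCompact_univ.elim_finite_subcover _
    (fun n => hU.preimage (h ^ n).continuous) hcover
  refine ⟨s.sup Int.natAbs, fun x => ?_⟩
  obtain ⟨n, hns, hn⟩ := mem_iUnion₂.1 (hs (mem_univ x))
  exact ⟨n, Finset.le_sup (f := Int.natAbs) hns, hn⟩

/-- Shifting `x` forward past the uniform bound on two-sided hitting times makes the time
positive. -/
theorem exists_pos_iterate_mem (hU : IsOpen U) (hne : U.Nonempty) (x : X) :
    ∃ k, 1 ≤ k ∧ (⇑h)^[k] x ∈ U := by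
  obtain ⟨N, hN⟩ := exists_natAbs_le_zpow_mem hmin hU hne
  obtain ⟨n, hnN, hn⟩ := hN ((h ^ ((N + 1 : ℕ) : ℤ)) x)
  have hpos : 0 < n + (N + 1 : ℕ) := by omega
  refine ⟨(n + (N + 1 : ℕ)).toNat, by omega, ?_⟩
  rw [← coe_pow, ← zpow_natCast, Int.toNat_of_nonneg hpos.le, zpow_add]
  exact hn

end Homeomorph

section FirstReturn

variable {X : Type*} [TopologicalSpace X] {h : X ≃ₜ X} {Y : Set X}

def TowersCover (h : X ≃ₜ X) (Y : Set X) : Prop :=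
  ∀ x, ∃ z ∈ Y, ∃ j, 1 ≤ j ∧ j ≤ firstReturnTime h Y z ∧ (⇑h)^[j] z = x

theorem firstReturnTime_le {y : X} {n : ℕ} (hn : 1 ≤ n) (hy : (⇑h)^[n] y ∈ Y) :
    firstReturnTime h Y y ≤ n :=
  Nat.sInf_le ⟨hn, hy⟩

theorem one_le_firstReturnTime {y : X} (hy : ∃ n, 1 ≤ n ∧ (⇑h)^[n] y ∈ Y) :
    1 ≤ firstReturnTime h Y y :=
  (Nat.sInf_mem hy).1

/-- Also when `y` never returns, since then the first return time is `sInf ∅ = 0`. -/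
theorem iterate_firstReturnTime_mem {y : X} (hy : y ∈ Y) :
    (⇑h)^[firstReturnTime h Y y] y ∈ Y := by
  rcases Set.eq_empty_or_nonempty {n : ℕ | 1 ≤ n ∧ (⇑h)^[n] y ∈ Y} with hempty | hret
  · rwa [firstReturnTime, hempty, Nat.sInf_empty]
  · exact (Nat.sInf_mem hret).2

theorem closure_returnSet_subset_preimage (hY : IsClosed Y) (m : ℕ) :
    closure (returnSet h Y m) ⊆ (⇑h)^[m] ⁻¹' Y :=
  closure_minimal (fun _ ⟨hy, hm⟩ => hm ▸ iterate_firstReturnTime_mem hy)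
    (hY.preimage (h.continuous.iterate m))

theorem towersCover_of_forall_returns
    (hret : ∀ y ∈ Y, ∃ n, 1 ≤ n ∧ (⇑h)^[n] y ∈ Y)
    (hback : ∀ x, ∃ n, 1 ≤ n ∧ (⇑h.symm)^[n] x ∈ Y) : TowersCover h Y := by
  classical
  intro x
  have hx := hback x
  obtain ⟨hm, hmY⟩ := Nat.find_spec hx
  set m := Nat.find hx
  have hcancel (k : ℕ) (w : X) : (⇑h)^[k] ((⇑h.symm)^[k] w) = w :=
    (Function.LeftInverse.iterate h.apply_symm_apply k) w
  refine ⟨_, hmY, m, hm, ?_, hcancel m x⟩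
  by_contra! hlt
  set r := firstReturnTime h Y ((⇑h.symm)^[m] x)
  have hr : 1 ≤ r := one_le_firstReturnTime (hret _ hmY)
  have hreturn : (⇑h)^[r] ((⇑h.symm)^[m] x) = (⇑h.symm)^[m - r] x := by
    rw [show m = r + (m - r) by omega, Function.iterate_add_apply, hcancel, Nat.add_sub_cancel_left]
  refine Nat.find_min hx (m := m - r) (by omega) ⟨by omega, ?_⟩
  rw [← hreturn]
  exact iterate_firstReturnTime_mem hmY

theorem TowersCover.iUnion_iterate_image_closure_returnSet_eq_univ (hcover : TowersCover h Y) :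
    (⋃ (m : ℕ) (j : ℕ) (_ : 1 ≤ j) (_ : j ≤ m), (⇑h)^[j] '' closure (returnSet h Y m)) =
      univ := by
  refine eq_univ_of_forall fun x => ?_
  obtain ⟨z, hz, j, hj, hjr, rfl⟩ := hcover x
  simp only [mem_iUnion]
  exact ⟨_, j, hj, hjr, mem_image_of_mem _ (subset_closure ⟨hz, rfl⟩)⟩

theorem TowersCover.iUnion_iterate_image_closure_returnSet_eq (hcover : TowersCover h Y)
    (hY : IsClosed Y) : (⋃ m : ℕ, (⇑h)^[m] '' closure (returnSet h Y m)) = Y := by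
  refine (iUnion_subset fun m => image_subset_iff.2 (closure_returnSet_subset_preimage hY m)
    ).antisymm fun y hy => ?_
  obtain ⟨z, hz, j, hj, hjr, rfl⟩ := hcover y
  have hrj : firstReturnTime h Y z = j := hjr.antisymm' (firstReturnTime_le hj hy)
  exact mem_iUnion.2 ⟨j, mem_image_of_mem _ (subset_closure ⟨hz, hrj⟩)⟩

end FirstReturn

theorem rokhlin_towers_cover_general
    {X : Type*} [MetricSpace X] [CompactSpace X]
    (h : X ≃ₜ X)
    (hmin : ∀ x : X, Dense (Set.range fun n : ℤ => (h.toEquiv ^ n) x))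
    (Y : Set X) (hYclosed : IsClosed Y) (hYint : (interior Y).Nonempty) :
    (⋃ (m : ℕ) (j : ℕ) (_ : 1 ≤ j) (_ : j ≤ m),
        (⇑h)^[j] '' closure (returnSet h Y m)) = Set.univ ∧
      (⋃ (m : ℕ), (⇑h)^[m] '' closure (returnSet h Y m)) = Y := by
  have hmin' : ∀ x, Dense (range fun n : ℤ => (h ^ n) x) := by
    simpa only [← Homeomorph.toEquiv_zpow, Homeomorph.coe_toEquiv] using hmin
  have hmeets (g : X ≃ₜ X) (hg : ∀ x, Dense (range fun n : ℤ => (g ^ n) x)) (x : X) :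
      ∃ n, 1 ≤ n ∧ (⇑g)^[n] x ∈ Y :=
    (Homeomorph.exists_pos_iterate_mem hg isOpen_interior hYint x).imp
      fun _ => And.imp_right (interior_subset ·)
  have hcover : TowersCover h Y := towersCover_of_forall_returns (fun y _ => hmeets h hmin' y)
    (hmeets h⁻¹ (Homeomorph.dense_zpow_orbit_inv hmin'))
  exact ⟨hcover.iUnion_iterate_image_closure_returnSet_eq_univ,
    hcover.iUnion_iterate_image_closure_returnSet_eq hYclosed⟩

/-- For a minimal homeomorphism `h` of an infinite compact metric space `X`
and a closed `Y ⊆ X` with nonempty interior, with `Y_m = closure {y ∈ Y : r(y) = m}`: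
`⋃_m ⋃_{j=1}^{m} h^j(Y_m) = X` and `⋃_m h^m(Y_m) = Y`.
(For values `m` not attained by the first return time the corresponding set is empty,
so indexing over all `m` is equivalent to indexing over the attained values
`n(0) < ⋯ < n(l)`.) -/
theorem rokhlin_towers_cover
    {X : Type*} [MetricSpace X] [CompactSpace X] [Infinite X]
    (h : X ≃ₜ X)
    (hmin : ∀ x : X, Dense (Set.range fun n : ℤ => (h.toEquiv ^ n) x))
    (Y : Set X) (hYclosed : IsClosed Y) (hYint : (interior Y).Nonempty) :
    (⋃ (m : ℕ) (j : ℕ) (_ : 1 ≤ j) (_ : j ≤ m),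
        (⇑h)^[j] '' closure (returnSet h Y m)) = Set.univ ∧
      (⋃ (m : ℕ), (⇑h)^[m] '' closure (returnSet h Y m)) = Y :=
  rokhlin_towers_cover_general h hmin Y hYclosed hYint
end

section
/- Let X be a compact metric space, let h : X → X be a minimal homeomorphism, let Z ⊆ X be a closed universally null set, and let ε > 0. Then there exists an open set U ⊆ X containing Z such that μ(U) < ε for every h-invariant Borel probability measure μ on X. -/
open MeasureTheory

/-- A Borel set `Z` is universally null for the homeomorphism `h` if `μ Z = 0` for
every `h`-invariant Borel probability measure `μ`. -/
def UniversallyNull {X : Type*} [TopologicalSpace X] [MeasurableSpace X]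
    (h : X ≃ₜ X) (Z : Set X) : Prop :=
  ∀ μ : Measure X, IsProbabilityMeasure μ →
    (∀ s : Set X, MeasurableSet s → μ (⇑h ⁻¹' s) = μ s) → μ Z = 0

/-! The invariant probability measures form a closed, hence compact, subset of the space of
probability measures with the weak topology. By the portmanteau theorem `μ ↦ μ F` is upper
semicontinuous for closed `F`, and every invariant `μ` gives `Z` measure zero, so
`μ (cthickening δ Z) < ε` for small `δ`. Compactness makes one `δ` work for all invariant
measures at once, and `U = thickening δ Z` is the required open set. -/

open Filter Metric
open scoped ENNReal

namespace MeasureTheory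

lemma Measure.map_eq_self_iff {Ω : Type*} [MeasurableSpace Ω] {μ : Measure Ω} {f : Ω → Ω}
    (hf : Measurable f) : μ.map f = μ ↔ ∀ s, MeasurableSet s → μ (f ⁻¹' s) = μ s := by
  simp only [Measure.ext_iff]
  exact forall₂_congr fun s hs ↦ by rw [Measure.map_apply hf hs]

namespace ProbabilityMeasure

variable {Ω : Type*} [MeasurableSpace Ω] [TopologicalSpace Ω] [OpensMeasurableSpace Ω]

lemma upperSemicontinuous_measure_of_isClosed [HasOuterApproxClosed Ω] {F : Set Ω}
    (hF : IsClosed F) : UpperSemicontinuous fun μ : ProbabilityMeasure Ω ↦ (μ : Measure Ω) F :=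
  fun _ _ hc ↦ eventually_lt_of_limsup_lt
    ((limsup_measure_closed_le_of_tendsto tendsto_id hF).trans_lt hc)

lemma isClosed_setOf_map_eq_self [HasOuterApproxClosed Ω] [BorelSpace Ω] {f : Ω → Ω}
    (hf : Continuous f) :
    IsClosed {μ : ProbabilityMeasure Ω | μ.map hf.measurable.aemeasurable = μ} :=
  isClosed_eq (continuous_map hf) continuous_id

lemma exists_pos_forall_measure_cthickening_lt {X : Type*} [PseudoMetricSpace X]
    [MeasurableSpace X] [OpensMeasurableSpace X] {S : Set (ProbabilityMeasure X)}
    (hS : IsCompact S) {Z : Set X} (hZ : IsClosed Z) (hSZ : ∀ μ ∈ S, (μ : Measure X) Z = 0)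
    {ε : ℝ≥0∞} (hε : ε ≠ 0) :
    ∃ δ > 0, ∀ μ ∈ S, (μ : Measure X) (cthickening δ Z) < ε := by
  set δ : ℕ → ℝ := fun n ↦ 1 / (n + 1)
  set U : ℕ → Set (ProbabilityMeasure X) :=
    fun n ↦ {μ | (μ : Measure X) (cthickening (δ n) Z) < ε}
  have hU_open (n : ℕ) : IsOpen (U n) :=
    (upperSemicontinuous_measure_of_isClosed isClosed_cthickening).isOpen_preimage ε
  have hU_mono : Monotone U := fun m n hmn μ hμ ↦
    (measure_mono (cthickening_mono (Nat.one_div_le_one_div hmn) Z)).trans_lt hμ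
  have hSU : S ⊆ ⋃ n, U n := by
    intro μ hμ
    have hlim := (tendsto_measure_cthickening_of_isClosed (μ := μ)
      ⟨1, one_pos, measure_ne_top _ _⟩ hZ).comp tendsto_one_div_add_atTop_nhds_zero_nat
    rw [hSZ μ hμ] at hlim
    exact Set.mem_iUnion.2 (hlim.eventually (gt_mem_nhds (pos_iff_ne_zero.2 hε))).exists
  obtain ⟨n, hn⟩ := hS.elim_directed_cover U hU_open hSU hU_mono.directed_le
  exact ⟨δ n, Nat.one_div_pos_of_nat, hn⟩

end ProbabilityMeasure

end MeasureTheory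

theorem exists_open_superset_small_invariant_measure_general
    {X : Type*} [MetricSpace X] [CompactSpace X]
    [MeasurableSpace X] [BorelSpace X]
    (h : X ≃ₜ X)
    (Z : Set X) (hZclosed : IsClosed Z) (hZnull : UniversallyNull h Z)
    (ε : ℝ) (hε : 0 < ε) :
    ∃ U : Set X, IsOpen U ∧ Z ⊆ U ∧
      ∀ μ : Measure X, IsProbabilityMeasure μ →
        (∀ s : Set X, MeasurableSet s → μ (⇑h ⁻¹' s) = μ s) →
        μ U < ENNReal.ofReal ε := by
  set S := {μ : ProbabilityMeasure X | μ.map h.continuous.measurable.aemeasurable = μ}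
  have mem_S_iff (μ : ProbabilityMeasure X) :
      μ ∈ S ↔ ∀ s, MeasurableSet s → (μ : Measure X) (h ⁻¹' s) = (μ : Measure X) s := by
    rw [← Measure.map_eq_self_iff h.continuous.measurable, ← ProbabilityMeasure.toMeasure_map,
      ProbabilityMeasure.toMeasure_injective.eq_iff]
    exact Iff.rfl
  obtain ⟨δ, hδ, hS⟩ := ProbabilityMeasure.exists_pos_forall_measure_cthickening_lt
    (ProbabilityMeasure.isClosed_setOf_map_eq_self h.continuous).isCompact hZclosed
    (fun μ hμ ↦ hZnull μ inferInstance ((mem_S_iff μ).1 hμ)) (ENNReal.ofReal_pos.2 hε).ne'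
  refine ⟨thickening δ Z, isOpen_thickening, self_subset_thickening hδ Z, fun μ hμ hinv ↦ ?_⟩
  exact (measure_mono (thickening_subset_cthickening δ Z)).trans_lt
    (hS ⟨μ, hμ⟩ ((mem_S_iff ⟨μ, hμ⟩).2 hinv))

/-- Let `X` be a compact metric space, `h : X → X` a minimal
homeomorphism, `Z ⊆ X` a closed universally null set, and `ε > 0`. Then there is an
open set `U ⊇ Z` such that `μ U < ε` for every `h`-invariant Borel probability
measure `μ` on `X`. -/
theorem exists_open_superset_small_invariant_measure
    {X : Type*} [MetricSpace X] [CompactSpace X]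
    [MeasurableSpace X] [BorelSpace X]
    (h : X ≃ₜ X)
    (hmin : ∀ x : X, Dense (Set.range fun n : ℤ => (h.toEquiv ^ n) x))
    (Z : Set X) (hZclosed : IsClosed Z) (hZnull : UniversallyNull h Z)
    (ε : ℝ) (hε : 0 < ε) :
    ∃ U : Set X, IsOpen U ∧ Z ⊆ U ∧
      ∀ μ : Measure X, IsProbabilityMeasure μ →
        (∀ s : Set X, MeasurableSet s → μ (⇑h ⁻¹' s) = μ s) →
        μ U < ENNReal.ofReal ε :=
  exists_open_superset_small_invariant_measure_general h Z hZclosed hZnull ε hε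
end

section
/- Let A be a unital C*-algebra with real rank zero, and let a_1, a_2, a_3 ∈ A satisfy 0 ≤ a_1 ≤ a_2 ≤ a_3 ≤ 1, a_3 a_2 = a_2, and a_2 a_1 = a_1. Then there exists a projection e ∈ A such that e a_1 = a_1 e = a_1 and a_3 e = e a_3 = e. -/
/-!
Approximate `a₂ - 1/2` by an invertible self-adjoint `b` within `1/4`; the spectral projection
`p` of `b` for `(0, ∞)` satisfies `p a₂ p ≥ p/4` and `p⊥ (1 - a₂) p⊥ ≥ p⊥/4`. If `z r = z` and
`z⋆z ≥ c r` for a projection `r` and some `c > 0`, then `z` has a range projection, and it lies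
in `z A z⋆`. Removing from `1` the range projection of `√(1 - a₂) p⊥` gives a projection
`q` with `q a₁ = a₁` and `q a₂ q ≥ q/4`; the range projection `e` of `√a₂ q` then satisfies
`e a₁ = a₁`, and `a₃ e = e` because `e ∈ √a₂ A √a₂` and `a₃ √a₂ = √a₂`.
-/

open CFC

def HasRealRankZero (A : Type*) [NormedRing A] [StarRing A] : Prop :=
  ∀ a : A, IsSelfAdjoint a → ∀ ε : ℝ, 0 < ε → ∃ b : A, IsSelfAdjoint b ∧ IsUnit b ∧ ‖a - b‖ < ε

lemma IsIdempotentElem.conjugate_one_sub {R : Type*} [Ring R] {p : R} (hp : IsIdempotentElem p)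
    (a : R) : p * (1 - a) * p = p - p * a * p := by
  rw [mul_sub, mul_one, sub_mul, hp.eq]

section

variable {A : Type*} [CStarAlgebra A] [PartialOrder A] [StarOrderedRing A]

lemma CFC.sqrt_mul_eq_zero_of_mul_eq_zero {x y : A} (hx : 0 ≤ x) (h : x * y = 0) :
    sqrt x * y = 0 := by
  rw [← CStarRing.star_mul_self_eq_zero_iff, star_mul, (sqrt_nonneg x).isSelfAdjoint.star_eq,
    mul_assoc, ← mul_assoc (sqrt x), sqrt_mul_sqrt_self x hx, h, mul_zero]

lemma CFC.mul_sqrt_eq_zero_of_mul_eq_zero {x y : A} (hx : 0 ≤ x) (h : y * x = 0) :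
    y * sqrt x = 0 := by
  have h' : x * star y = 0 := by
    simpa only [star_mul, hx.isSelfAdjoint.star_eq, star_zero] using congr(star $h)
  simpa only [star_mul, star_star, (sqrt_nonneg x).isSelfAdjoint.star_eq, star_zero]
    using congr(star $(sqrt_mul_eq_zero_of_mul_eq_zero hx h'))

/-- `1 + √x` is invertible and `(1 + √x) (1 - √x) y = (1 - x) y = 0`. -/
lemma CFC.sqrt_mul_eq_self_of_mul_eq_self {x y : A} (hx : 0 ≤ x) (h : x * y = y) :
    sqrt x * y = y := by
  have hunit : IsUnit (1 + sqrt x) :=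
    CStarAlgebra.isUnit_of_le 1 (le_add_of_nonneg_right (sqrt_nonneg x))
  have hfactor : (1 + sqrt x) * ((1 - sqrt x) * y) = 0 := by
    have hdiff : (1 + sqrt x) * (1 - sqrt x) = 1 - x := by
      rw [mul_sub, add_mul, add_mul, one_mul, one_mul, mul_one, sqrt_mul_sqrt_self x hx]; abel
    rw [← mul_assoc, hdiff, sub_mul, one_mul, h, sub_self]
  rw [hunit.mul_right_eq_zero, sub_mul, one_mul, sub_eq_zero] at hfactor
  exact hfactor.symm

lemma IsSelfAdjoint.star_mul_self_sqrt_mul {x p : A} (hx : 0 ≤ x) (hp : IsSelfAdjoint p) :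
    star (sqrt x * p) * (sqrt x * p) = p * x * p := by
  rw [star_mul, hp.star_eq, (sqrt_nonneg x).isSelfAdjoint.star_eq, mul_assoc,
    ← mul_assoc (sqrt x), sqrt_mul_sqrt_self x hx, ← mul_assoc]

lemma IsStarProjection.smul_le_conjugate {p a : A} (hp : IsStarProjection p) {c : ℝ}
    (h : c • 1 ≤ a) : c • p ≤ p * a * p := by
  simpa [hp.isIdempotentElem.eq] using hp.isSelfAdjoint.conjugate_le_conjugate h

lemma IsStarProjection.conjugate_le_smul {p a : A} (hp : IsStarProjection p) {c : ℝ}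
    (h : a ≤ c • 1) : p * a * p ≤ c • p := by
  simpa [hp.isIdempotentElem.eq] using hp.isSelfAdjoint.conjugate_le_conjugate h

lemma IsSelfAdjoint.neg_smul_one_le_and_le_smul_one {d : A} (hd : IsSelfAdjoint d) {ε : ℝ}
    (hdε : ‖d‖ ≤ ε) : -ε • (1 : A) ≤ d ∧ d ≤ ε • 1 := by
  have hle : ‖d‖ • (1 : A) ≤ ε • 1 := smul_le_smul_of_nonneg_right hdε zero_le_one
  rw [← Algebra.algebraMap_eq_smul_one] at hle
  refine ⟨?_, hd.le_algebraMap_norm_self.trans hle⟩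
  rw [neg_smul]
  exact (neg_le_neg hle).trans hd.neg_algebraMap_norm_le_self

/-- The spectral projection of `b` onto `(0, ∞)`; it is a projection because `0 ∉ σ(b)`. -/
lemma IsSelfAdjoint.exists_isStarProjection_conjugate_nonneg {b : A} (hb : IsSelfAdjoint b)
    (hb_unit : IsUnit b) :
    ∃ p : A, IsStarProjection p ∧ 0 ≤ p * b * p ∧ (1 - p) * b * (1 - p) ≤ 0 := by
  set g : ℝ → ℝ := fun t => if 0 < t then 1 else 0
  have hg : ContinuousOn g (spectrum ℝ b) := by
    refine ContinuousOn.if (fun t ht => ?_) continuousOn_const continuousOn_const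
    rw [show frontier {t : ℝ | 0 < t} = {0} from frontier_Ioi] at ht
    exact absurd (ht.2 ▸ ht.1) (spectrum.zero_notMem ℝ hb_unit)
  have hconj : ∀ f : ℝ → ℝ, ContinuousOn f (spectrum ℝ b) →
      cfc f b * b * cfc f b = cfc (fun t => f t * t * f t) b := fun f hf => by
    rw [cfc_mul (fun t => f t * t) f b, cfc_mul f (fun t => t) b, cfc_id' ℝ b]
  have hcompl : 1 - cfc g b = cfc (fun t => 1 - g t) b := by
    rw [cfc_sub (fun _ => 1) g b, cfc_const_one ℝ b]
  refine ⟨cfc g b, ⟨?_, cfc_predicate g b⟩, ?_, ?_⟩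
  · rw [IsIdempotentElem, ← cfc_mul g g b]
    exact cfc_congr fun t _ => by simp only [g]; split_ifs <;> simp
  · rw [hconj g hg]
    exact cfc_nonneg fun t _ => by simp only [g]; split_ifs <;> simp [le_of_lt, *]
  · rw [hcompl, hconj (fun t => 1 - g t) (continuousOn_const.sub hg)]
    exact cfc_nonpos _ _ fun t _ => by simp only [g]; split_ifs <;> simp [not_lt.mp, *]

lemma HasRealRankZero.exists_isStarProjection_splitting (hA : HasRealRankZero A) {a : A}
    (ha : IsSelfAdjoint a) (t : ℝ) {ε : ℝ} (hε : 0 < ε) :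
    ∃ p : A, IsStarProjection p ∧ (t - ε) • p ≤ p * a * p ∧
      (1 - p) * a * (1 - p) ≤ (t + ε) • (1 - p) := by
  have hshift : IsSelfAdjoint (a - t • 1) := ha.sub ((IsSelfAdjoint.all t).smul (.one A))
  obtain ⟨b, hb, hb_unit, hab⟩ := hA _ hshift ε hε
  obtain ⟨p, hp, hpbp, hrbr⟩ := hb.exists_isStarProjection_conjugate_nonneg hb_unit
  obtain ⟨hd_ge, hd_le⟩ := (hshift.sub hb).neg_smul_one_le_and_le_smul_one hab.le
  have hsplit : ∀ q : A, IsIdempotentElem q →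
      q * a * q = q * b * q + q * (a - t • 1 - b) * q + t • q := fun q hq => by
    simp only [mul_sub, sub_mul, mul_smul_comm, smul_mul_assoc, mul_one, hq.eq]; abel
  refine ⟨p, hp, ?_, ?_⟩
  · have hpdp := hp.smul_le_conjugate hd_ge
    rw [hsplit p hp.isIdempotentElem]
    calc (t - ε) • p = 0 + -ε • p + t • p := by module
      _ ≤ _ := by gcongr
  · have hrdr := hp.one_sub.conjugate_le_smul hd_le
    rw [hsplit (1 - p) hp.one_sub.isIdempotentElem]
    calc _ ≤ 0 + ε • (1 - p) + t • (1 - p) := by gcongr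
      _ = (t + ε) • (1 - p) := by module

/-- `e = z (z⋆z + 1 - p)⁻¹ z⋆` is the range projection of `z`: the lower bound makes
`z⋆z + 1 - p` invertible, and its inverse inverts `z⋆z` on the corner `pAp`. -/
lemma exists_isStarProjection_range {z p : A} (hp : IsStarProjection p) (hzp : z * p = z)
    {c : ℝ} (hc : 0 < c) (h : c • p ≤ star z * z) :
    ∃ e w : A, IsStarProjection e ∧ e = z * w * star z ∧ e * z = z := by
  set T := star z * z + (1 - p)
  have hTp : T * p = star z * z := by
    simp only [T, add_mul, sub_mul, one_mul, hp.isIdempotentElem.eq, sub_self, add_zero,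
      mul_assoc, hzp]
  have hT : IsStrictlyPositive T := by
    have hc' : 0 < min c 1 := lt_min hc one_pos
    refine (IsStrictlyPositive.smul hc' isStrictlyPositive_one).of_le ?_
    calc min c 1 • (1 : A) = min c 1 • p + min c 1 • (1 - p) := by rw [← smul_add, add_sub_cancel]
      _ ≤ c • p + (1 : ℝ) • (1 - p) := by
          gcongr
          exacts [hp.nonneg, min_le_left _ _, hp.one_sub_nonneg, min_le_right _ _]
      _ ≤ T := by rw [one_smul]; exact add_le_add_left h _
  set w := Ring.inverse T
  have hez : z * w * star z * z = z := by
    rw [mul_assoc, ← hTp, ← mul_assoc, mul_assoc z, Ring.inverse_mul_cancel _ hT.isUnit, mul_one,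
      hzp]
  refine ⟨z * w * star z, w, ⟨?_, ?_⟩, rfl, hez⟩
  · calc z * w * star z * (z * w * star z) = (z * w * star z * z) * w * star z := by
          simp only [mul_assoc]
      _ = z * w * star z := by rw [hez]
  · have hw : IsSelfAdjoint w := hT.isSelfAdjoint.ringInverse
    simp only [IsSelfAdjoint, star_mul, star_star, hw.star_eq, mul_assoc]

/-- Since `q √x = q √x p`, we get `q x q = q (√x p) (√x p)⋆ q`, and
`‖√x p‖² = ‖p x p‖ ≤ t`. -/
lemma IsStarProjection.conjugate_le_smul_of_mul_sqrt_mul_eq_zero {x p q : A} (hx : 0 ≤ x)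
    (hp : IsStarProjection p) (hq : IsStarProjection q) (hqxp : q * sqrt x * (1 - p) = 0)
    {t : ℝ} (ht : 0 ≤ t) (hpxp : p * x * p ≤ t • p) : q * x * q ≤ t • q := by
  set y := sqrt x * p
  have hsqrt : IsSelfAdjoint (sqrt x) := (sqrt_nonneg x).isSelfAdjoint
  have hnorm : ‖y‖ ^ 2 ≤ t := by
    rw [sq, ← CStarRing.norm_star_mul_self, hp.isSelfAdjoint.star_mul_self_sqrt_mul hx]
    calc ‖p * x * p‖ ≤ ‖t • p‖ :=
          CStarAlgebra.norm_le_norm_of_nonneg_of_le (hp.isSelfAdjoint.conjugate_nonneg hx) hpxp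
      _ ≤ t := by
          rw [norm_smul, Real.norm_of_nonneg ht]
          exact mul_le_of_le_one_right ht (hp.norm_le p)
  have hqy : q * sqrt x = q * y := by
    rwa [mul_sub, mul_one, sub_eq_zero, mul_assoc] at hqxp
  have hyq : sqrt x * q = star y * q := by
    simpa only [star_mul, hsqrt.star_eq, hq.isSelfAdjoint.star_eq] using congr(star $hqy)
  have hqx : q * x * q = q * (y * star y) * q := by
    calc q * x * q = (q * sqrt x) * (sqrt x * q) := by
          conv_lhs => rw [← sqrt_mul_sqrt_self x hx]
          simp only [mul_assoc]
      _ = q * (y * star y) * q := by rw [hqy, hyq]; simp only [mul_assoc]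
  rw [hqx]
  refine hq.conjugate_le_smul (CStarAlgebra.mul_star_le_algebraMap_norm_sq.trans ?_)
  rw [Algebra.algebraMap_eq_smul_one]
  exact smul_le_smul_of_nonneg_right hnorm zero_le_one

/-- `q` is the complement of the range projection of `√(1 - a) (1 - p)`. -/
lemma exists_isStarProjection_mul_eq_self_and_smul_le_conjugate {a b p : A} (ha : a ≤ 1)
    (hab : a * b = b) (hp : IsStarProjection p) {c d : ℝ} (hc : c ≤ 1) (hd : d < 1)
    (hpap : c • p ≤ p * a * p) (hrar : (1 - p) * a * (1 - p) ≤ d • (1 - p)) :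
    ∃ q : A, IsStarProjection q ∧ q * b = b ∧ c • q ≤ q * a * q := by
  have hB : 0 ≤ 1 - a := sub_nonneg.mpr ha
  set z := sqrt (1 - a) * (1 - p)
  have hz_lower : (1 - d) • (1 - p) ≤ star z * z := by
    rw [hp.one_sub.isSelfAdjoint.star_mul_self_sqrt_mul hB,
      hp.one_sub.isIdempotentElem.conjugate_one_sub, sub_smul, one_smul]
    exact sub_le_sub_left hrar _
  obtain ⟨e, w, he, rfl, hez⟩ := exists_isStarProjection_range hp.one_sub
    (by rw [mul_assoc, hp.one_sub.isIdempotentElem.eq]) (sub_pos.mpr hd) hz_lower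
  have hsqrt_b : sqrt (1 - a) * b = 0 :=
    sqrt_mul_eq_zero_of_mul_eq_zero hB (by rw [sub_mul, one_mul, hab, sub_self])
  refine ⟨1 - z * w * star z, he.one_sub, ?_, ?_⟩
  · have hzb : star z * b = 0 := by
      rw [star_mul, (sqrt_nonneg (1 - a)).isSelfAdjoint.star_eq, mul_assoc, hsqrt_b, mul_zero]
    rw [sub_mul, one_mul, mul_assoc, hzb, mul_zero, sub_zero]
  · have hqB := IsStarProjection.conjugate_le_smul_of_mul_sqrt_mul_eq_zero hB hp he.one_sub
      (by rw [mul_assoc, sub_mul, one_mul, hez, sub_self]) (sub_nonneg.mpr hc)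
      (by rw [hp.isIdempotentElem.conjugate_one_sub, sub_smul, one_smul]
          exact sub_le_sub_left hpap _)
    rw [he.one_sub.isIdempotentElem.conjugate_one_sub, sub_smul, one_smul] at hqB
    exact (sub_le_sub_iff_left _).mp hqB

lemma exists_isStarProjection_mul_eq_self_and_mul_eq_self {a a' b q : A} (ha : 0 ≤ a)
    (ha' : a' * a = a) (hab : a * b = b) (hq : IsStarProjection q) (hqb : q * b = b) {c : ℝ}
    (hc : 0 < c) (hqaq : c • q ≤ q * a * q) :
    ∃ e : A, IsStarProjection e ∧ e * b = b ∧ a' * e = e := by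
  obtain ⟨e, w, he, rfl, hez⟩ := exists_isStarProjection_range (z := sqrt a * q) hq
    (by rw [mul_assoc, hq.isIdempotentElem.eq]) hc
    (by rwa [hq.isSelfAdjoint.star_mul_self_sqrt_mul ha])
  have hzb : sqrt a * q * b = b := by rw [mul_assoc, hqb, sqrt_mul_eq_self_of_mul_eq_self ha hab]
  have ha'_sqrt : a' * sqrt a = sqrt a := by
    have h : (1 - a') * sqrt a = 0 :=
      mul_sqrt_eq_zero_of_mul_eq_zero ha (by rw [sub_mul, one_mul, ha', sub_self])
    rwa [sub_mul, one_mul, sub_eq_zero, eq_comm] at h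
  refine ⟨_, he, ?_, ?_⟩
  · rw [← hzb, ← mul_assoc, hez]
  · simp only [← mul_assoc, ha'_sqrt]

end

/-- Let `A` be a unital C*-algebra with real rank zero (the invertible
self-adjoint elements are dense in the self-adjoint elements), and let
`a₁, a₂, a₃ ∈ A` satisfy `0 ≤ a₁ ≤ a₂ ≤ a₃ ≤ 1`, `a₃ a₂ = a₂`, and `a₂ a₁ = a₁`.
Then there is a projection `e ∈ A` with `e a₁ = a₁ e = a₁` and `a₃ e = e a₃ = e`. -/
theorem exists_projection_between
    {A : Type*} [CStarAlgebra A] [PartialOrder A] [StarOrderedRing A]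
    (hRR0 : ∀ a : A, IsSelfAdjoint a → ∀ ε : ℝ, 0 < ε →
      ∃ b : A, IsSelfAdjoint b ∧ IsUnit b ∧ ‖a - b‖ < ε)
    (a₁ a₂ a₃ : A)
    (h₀ : 0 ≤ a₁) (h₁₂ : a₁ ≤ a₂) (h₂₃ : a₂ ≤ a₃) (h₃ : a₃ ≤ 1)
    (h₃₂ : a₃ * a₂ = a₂) (h₂₁ : a₂ * a₁ = a₁) :
    ∃ e : A, IsSelfAdjoint e ∧ IsIdempotentElem e ∧
      e * a₁ = a₁ ∧ a₁ * e = a₁ ∧ a₃ * e = e ∧ e * a₃ = e := by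
  have ha₂ : 0 ≤ a₂ := h₀.trans h₁₂
  obtain ⟨p, hp, hpap, hrar⟩ := HasRealRankZero.exists_isStarProjection_splitting hRR0
    ha₂.isSelfAdjoint (1 / 2) (ε := 1 / 4) (by norm_num)
  obtain ⟨q, hq, hqa₁, hqaq⟩ := exists_isStarProjection_mul_eq_self_and_smul_le_conjugate
    (h₂₃.trans h₃) h₂₁ hp (by norm_num) (by norm_num) hpap hrar
  obtain ⟨e, he, hea₁, ha₃e⟩ := exists_isStarProjection_mul_eq_self_and_mul_eq_self
    ha₂ h₃₂ h₂₁ hq hqa₁ (by norm_num) hqaq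
  have ha₁e : a₁ * e = a₁ := by
    simpa only [star_mul, he.isSelfAdjoint.star_eq, h₀.isSelfAdjoint.star_eq]
      using congr(star $hea₁)
  have hea₃ : e * a₃ = e := by
    simpa only [star_mul, he.isSelfAdjoint.star_eq, (ha₂.trans h₂₃).isSelfAdjoint.star_eq]
      using congr(star $ha₃e)
  exact ⟨e, he.isSelfAdjoint, he.isIdempotentElem, hea₁, ha₁e, ha₃e, hea₃⟩
end

section
/- Let X be an infinite compact metric space and let h : X → X be a minimal homeomorphism. Then for every y ∈ X, every δ > 0, and all integers M ≤ N, there exists an open set U ⊆ X containing y such that the sets h^n(U), for M ≤ n ≤ N, are pairwise disjoint and each has diameter less than δ; consequently μ(U) ≤ 1/(N − M + 1) for every h-invariant Borel probability measure μ on X. -/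
/-! The orbit points `h^n y`, `M ≤ n ≤ N`, are pairwise distinct: otherwise the orbit of `y` is
finite, hence closed, and by minimality it would be all of the infinite space `X`. Pulling back
small pairwise disjoint open neighbourhoods of these finitely many points under `h^n` and
intersecting gives `U`. The `N - M + 1` disjoint translates of `U` all have measure `μ U` by
invariance, so they cannot fit into a probability space unless `μ U ≤ 1/(N - M + 1)`. -/

open MeasureTheory Set Function Finset Metric

theorem Function.Periodic.finite_range_of_int {α : Type*} {f : ℤ → α} {c : ℤ}
    (hf : Periodic f c) (hc : c ≠ 0) : (range f).Finite := by
  have habs : Periodic f |c| := by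
    rcases abs_choice c with h | h <;> rw [h]
    exacts [hf, hf.neg]
  refine ((Set.finite_Ico 0 |c|).image f).subset ?_
  rintro _ ⟨n, rfl⟩
  obtain ⟨m, hm, hfm⟩ := habs.exists_mem_Ico₀ (abs_pos.mpr hc) n
  exact ⟨m, hm, hfm.symm⟩

theorem Equiv.Perm.injective_zpow_apply_of_dense {X : Type*} [TopologicalSpace X] [T1Space X]
    [Infinite X] (σ : Equiv.Perm X) (x : X)
    (hx : Dense (range fun n : ℤ => (σ ^ n) x)) : Injective fun n : ℤ => (σ ^ n) x := by
  intro m n hmn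
  by_contra hne
  have hper : Periodic (fun k : ℤ => (σ ^ k) x) (m - n) := fun k => by
    have : (σ ^ (k + (m - n))) x = (σ ^ (k - n)) ((σ ^ m) x) := by
      rw [← Perm.mul_apply, ← zpow_add]; ring_nf
    simp only [this, hmn, ← Perm.mul_apply, ← zpow_add, sub_add_cancel]
  have hfin := hper.finite_range_of_int (sub_ne_zero.mpr hne)
  have huniv : range (fun k : ℤ => (σ ^ k) x) = univ := by
    rw [← hfin.isClosed.closure_eq, hx.closure_eq]
  exact Set.infinite_univ (huniv ▸ hfin)

theorem Homeomorph.coe_zpow {X : Type*} [TopologicalSpace X] (h : X ≃ₜ X) (n : ℤ) :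
    ⇑(h ^ n) = ⇑(h.toEquiv ^ n) :=
  congrArg DFunLike.coe (map_zpow (MonoidHom.mk' (Homeomorph.toEquiv : (X ≃ₜ X) → _)
    fun _ _ => rfl) h n)

theorem exists_isOpen_mem_pairwiseDisjoint_image {ι X Y : Type*} [TopologicalSpace X]
    [TopologicalSpace Y] [T2Space Y] (s : Finset ι) (g : ι → X → Y) (hg : ∀ i, Continuous (g i))
    (y : X) (hinj : InjOn (fun i => g i y) s) (W : ι → Set Y) (hWo : ∀ i, IsOpen (W i))
    (hW : ∀ i, g i y ∈ W i) :
    ∃ U : Set X, IsOpen U ∧ y ∈ U ∧ (∀ i ∈ s, g i '' U ⊆ W i) ∧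
      (s : Set ι).PairwiseDisjoint fun i => g i '' U := by
  obtain ⟨V, hV, hVdisj⟩ := (s.finite_toSet.image fun i => g i y).t2_separation
  set U := ⋂ i ∈ s, g i ⁻¹' (W i ∩ V (g i y))
  have hUsub : ∀ i ∈ s, g i '' U ⊆ W i ∩ V (g i y) := by
    rintro i hi _ ⟨u, hu, rfl⟩
    exact mem_iInter₂.mp hu i hi
  refine ⟨U, isOpen_biInter_finset fun i _ => ((hWo i).inter (hV _).2).preimage (hg i),
    mem_iInter₂.mpr fun i _ => ⟨hW i, (hV _).1⟩,
    fun i hi => (hUsub i hi).trans inter_subset_left, fun i hi j hj hij => ?_⟩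
  exact (hVdisj (mem_image_of_mem _ hi) (mem_image_of_mem _ hj) (hinj.ne hi hj hij)).mono
    ((hUsub i hi).trans inter_subset_right) ((hUsub j hj).trans inter_subset_right)

theorem Homeomorph.measurePreserving_zpow {X : Type*} [TopologicalSpace X] [MeasurableSpace X]
    [BorelSpace X] {μ : Measure X} (h : X ≃ₜ X) (hμ : MeasurePreserving h μ μ) (n : ℤ) :
    MeasurePreserving ⇑(h ^ n) μ μ := by
  induction n using Int.induction_on with
  | zero => exact MeasurePreserving.id μ
  | succ n ih => rw [zpow_add_one]; exact ih.comp hμ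
  | pred n ih => rw [zpow_sub_one]; exact ih.comp (hμ.symm h.toMeasurableEquiv)

theorem Homeomorph.measure_zpow_image {X : Type*} [TopologicalSpace X] [MeasurableSpace X]
    [BorelSpace X] {μ : Measure X} (h : X ≃ₜ X) (hμ : MeasurePreserving h μ μ) (n : ℤ)
    (s : Set X) : μ (⇑(h ^ n) '' s) = μ s := by
  rw [image_eq_preimage_symm, ← inv_def, ← zpow_neg]
  exact (h.measurePreserving_zpow hμ (-n)).measure_preimage_emb
    (h ^ (-n)).measurableEmbedding s

theorem measure_le_inv_card_of_pairwiseDisjoint {ι X : Type*} [MeasurableSpace X]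
    {μ : Measure X} [IsProbabilityMeasure μ] {s : Finset ι} {t : ι → Set X} {a : ENNReal}
    (hdisj : (s : Set ι).PairwiseDisjoint t) (hmeas : ∀ i ∈ s, MeasurableSet (t i))
    (ht : ∀ i ∈ s, μ (t i) = a) : a ≤ (#s : ENNReal)⁻¹ := by
  rw [ENNReal.le_inv_iff_mul_le, mul_comm, ← nsmul_eq_mul, ← Finset.sum_const,
    ← Finset.sum_congr rfl ht, ← measure_biUnion_finset hdisj hmeas]
  exact prob_le_one

theorem exists_small_disjoint_orbit_neighborhood_general
    {X : Type*} [MetricSpace X] [Infinite X]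
    [MeasurableSpace X] [BorelSpace X]
    (h : X ≃ₜ X)
    (hmin : ∀ x : X, Dense (Set.range fun n : ℤ => (h.toEquiv ^ n) x))
    (y : X) (δ : ℝ) (hδ : 0 < δ) (M N : ℤ) :
    ∃ U : Set X, IsOpen U ∧ y ∈ U ∧
      (∀ m n : ℤ, M ≤ m → m ≤ N → M ≤ n → n ≤ N → m ≠ n →
        Disjoint (⇑(h.toEquiv ^ m) '' U) (⇑(h.toEquiv ^ n) '' U)) ∧
      (∀ n : ℤ, M ≤ n → n ≤ N → Metric.diam (⇑(h.toEquiv ^ n) '' U) < δ) ∧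
      ∀ μ : Measure X, IsProbabilityMeasure μ →
        (∀ s : Set X, MeasurableSet s → μ (⇑h ⁻¹' s) = μ s) →
        μ U ≤ (((N - M + 1).toNat : ENNReal))⁻¹ := by
  have hinj := Equiv.Perm.injective_zpow_apply_of_dense h.toEquiv y (hmin y)
  simp only [← Homeomorph.coe_zpow] at hinj ⊢
  obtain ⟨U, hUopen, hyU, hUsmall, hUdisj⟩ := exists_isOpen_mem_pairwiseDisjoint_image
    (Icc M N) (fun n => ⇑(h ^ n)) (fun n => (h ^ n).continuous) y hinj.injOn
    (fun n => ball ((h ^ n) y) (δ / 3)) (fun _ => isOpen_ball)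
    (fun _ => mem_ball_self (by positivity))
  refine ⟨U, hUopen, hyU, fun m n hMm hmN hMn hnN hmn => hUdisj (by simp [hMm, hmN])
    (by simp [hMn, hnN]) hmn, fun n hMn hnN => ?_, fun μ _ hμ => ?_⟩
  · calc diam (⇑(h ^ n) '' U) ≤ diam (ball ((h ^ n) y) (δ / 3)) :=
          diam_mono (hUsmall n (by simp [hMn, hnN])) isBounded_ball
      _ ≤ 2 * (δ / 3) := diam_ball (by positivity)
      _ < δ := by linarith
  · have hpres : MeasurePreserving h μ μ := ⟨h.continuous.measurable,
      Measure.ext fun s hs => by rw [Measure.map_apply h.continuous.measurable hs, hμ s hs]⟩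
    have hbound := measure_le_inv_card_of_pairwiseDisjoint hUdisj
      (fun n _ => ((h ^ n).isOpenMap U hUopen).measurableSet)
      (fun n _ => h.measure_zpow_image hpres n U)
    rwa [Int.card_Icc, add_sub_right_comm] at hbound

/-- Let `X` be an infinite compact metric space and `h : X → X` a
minimal homeomorphism. Then for every `y ∈ X`, every `δ > 0`, and all integers
`M ≤ N`, there is an open set `U ∋ y` such that the sets `h^n(U)`, `M ≤ n ≤ N`, are
pairwise disjoint and each has diameter less than `δ`; consequently
`μ U ≤ 1/(N − M + 1)` for every `h`-invariant Borel probability measure `μ`. -/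
theorem exists_small_disjoint_orbit_neighborhood
    {X : Type*} [MetricSpace X] [CompactSpace X] [Infinite X]
    [MeasurableSpace X] [BorelSpace X]
    (h : X ≃ₜ X)
    (hmin : ∀ x : X, Dense (Set.range fun n : ℤ => (h.toEquiv ^ n) x))
    (y : X) (δ : ℝ) (hδ : 0 < δ) (M N : ℤ) (hMN : M ≤ N) :
    ∃ U : Set X, IsOpen U ∧ y ∈ U ∧
      (∀ m n : ℤ, M ≤ m → m ≤ N → M ≤ n → n ≤ N → m ≠ n →
        Disjoint (⇑(h.toEquiv ^ m) '' U) (⇑(h.toEquiv ^ n) '' U)) ∧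
      (∀ n : ℤ, M ≤ n → n ≤ N → Metric.diam (⇑(h.toEquiv ^ n) '' U) < δ) ∧
      ∀ μ : Measure X, IsProbabilityMeasure μ →
        (∀ s : Set X, MeasurableSet s → μ (⇑h ⁻¹' s) = μ s) →
        μ U ≤ (((N - M + 1).toNat : ENNReal))⁻¹ :=
  exists_small_disjoint_orbit_neighborhood_general h hmin y δ hδ M N
end
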